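/- Let q be an odd prime power, let n be an odd integer with n ≤ q, set k = (n+1)/2, and let a_1, ..., a_n be distinct elements of F_q. If −L_a(a_i)^{−1} is a nonzero square in F_q for all 1 ≤ i ≤ n, then there exist nonzero v_1, ..., v_n ∈ F_q with v_i^2 = −L_a(a_i)^{−1} such that the extended code GRS_k(a, v, ∞) is an MDS Euclidean self-dual code of length n+1 (i.e., it has dimension (n+1)/2, minimum distance (n+1)/2 + 1, and equals its Euclidean dual in F_q^{n+1}). -/

import Mathlib

open Finset

variable {F : Type*} [Field F]

/-- The extended generalized Reed–Solomon code
`GRS_k(a, v, ∞) = { (v₁ f(a₁), …, vₙ f(aₙ), f_{k-1}) : f ∈ F[x], deg f ≤ k - 1 }`. -/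
noncomputable def eGRSCode (n k : ℕ) (a v : Fin n → F) : Submodule F (Fin (n + 1) → F) :=
  (Polynomial.degreeLT F k).map
    (LinearMap.pi (Fin.lastCases (Polynomial.lcoeff F (k - 1))
      (fun i => v i • Polynomial.leval (a i))))

/-- The Euclidean dual code `C^⊥ = { u : ∀ c ∈ C, ∑ i, u i * c i = 0 }`. -/
def dualCode {m : ℕ} (C : Submodule F (Fin m → F)) : Submodule F (Fin m → F) where
  carrier := { u | ∀ c ∈ C, ∑ i, u i * c i = 0 }
  add_mem' := by
    intro u w hu hw c hc
    simp only [Set.mem_setOf_eq] at hu hw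
    simp [Pi.add_apply, add_mul, Finset.sum_add_distrib, hu c hc, hw c hc]
  zero_mem' := by intro c hc; simp
  smul_mem' := by
    intro r u hu c hc
    simp only [Set.mem_setOf_eq] at hu
    simp [Pi.smul_apply, smul_eq_mul, mul_assoc, ← Finset.mul_sum, hu c hc]

/-- `C` has minimum Hamming distance `d`. -/
def IsMinDist [DecidableEq F] {m : ℕ} (C : Submodule F (Fin m → F)) (d : ℕ) : Prop :=
  (∀ c ∈ C, c ≠ 0 → d ≤ hammingNorm c) ∧ ∃ c ∈ C, c ≠ 0 ∧ hammingNorm c = d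

/-!
Codewords of `GRS_k(a, v, ∞)` are the vectors `(v i * f (a i))ᵢ` extended by the coefficient of
`x^(k-1)`, for `deg f < k`. A nonzero `f` vanishes at no more than `natDegree f` of the `a i`, and
at one fewer than `k - 1` when its `x^(k-1)` coefficient is zero, so every nonzero codeword has
weight at least `n - k + 2`; the nodal polynomial of `k - 1` of the points attains it.

For self-duality with `n = 2k - 1`, the inner product of the codewords of `f` and `g` is
`∑ᵢ vᵢ² (fg)(aᵢ) + f_{k-1} g_{k-1}`. Since `vᵢ² = -L_a(aᵢ)⁻¹` and `deg fg < n`, Lagrange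
interpolation gives `∑ᵢ (fg)(aᵢ) / L_a(aᵢ) = (fg)_{n-1} = f_{k-1} g_{k-1}`, so the code is
self-orthogonal, and it is self-dual because its dimension is half the length.
-/

open Polynomial

lemma Polynomial.natDegree_le_pred_of_degree_lt {R : Type*} [Semiring R] {p : R[X]} {k : ℕ}
    (hp : p.degree < k) : p.natDegree ≤ k - 1 := by
  rcases eq_or_ne p 0 with rfl | hp0
  · simp
  · have := (natDegree_lt_iff_degree_lt hp0).2 hp
    omega

lemma Polynomial.card_filter_eval_eq_zero_le [DecidableEq F] {ι : Type*} [Fintype ι]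
    {a : ι → F} (ha : Function.Injective a) {f : F[X]} (hf : f ≠ 0) :
    #{i | f.eval (a i) = 0} ≤ f.natDegree := by
  rw [← card_image_of_injective _ ha]
  refine card_le_degree_of_subset_roots fun x hx => ?_
  obtain ⟨i, hi, rfl⟩ := mem_image.mp hx
  exact (mem_roots hf).2 (mem_filter.mp hi).2

lemma finrank_dualCode {m : ℕ} (C : Submodule F (Fin m → F)) :
    Module.finrank F (dualCode C) + Module.finrank F C = m := by
  classical
  have : dualCode C = C.dualAnnihilator.comap (dotProductEquiv F (Fin m)).toLinearMap := by
    ext u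
    simp only [Submodule.mem_comap, Submodule.mem_dualAnnihilator, LinearEquiv.coe_coe,
      dotProductEquiv_apply_apply, dotProduct]
    rfl
  rw [this, Submodule.comap_equiv_eq_map_symm, LinearEquiv.finrank_map_eq, add_comm,
    Subspace.finrank_add_finrank_dualAnnihilator_eq, Module.finrank_fin_fun]

lemma eq_dualCode_of_le {m : ℕ} {C : Submodule F (Fin m → F)} (hC : C ≤ dualCode C)
    (hdim : 2 * Module.finrank F C = m) : C = dualCode C :=
  Submodule.eq_of_le_of_finrank_le hC (by have := finrank_dualCode C; omega)

namespace eGRSCode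

variable {n k : ℕ} {a v : Fin n → F}

noncomputable def word (k : ℕ) (a v : Fin n → F) (f : F[X]) : Fin (n + 1) → F :=
  Fin.lastCases (f.coeff (k - 1)) fun i => v i * f.eval (a i)

@[simp] lemma word_castSucc (f : F[X]) (i : Fin n) :
    word k a v f i.castSucc = v i * f.eval (a i) := by
  simp [word]

@[simp] lemma word_last (f : F[X]) : word k a v f (Fin.last n) = f.coeff (k - 1) := by
  simp [word]

lemma pi_lastCases_eq_word (f : F[X]) :
    LinearMap.pi (Fin.lastCases (Polynomial.lcoeff F (k - 1))
      (fun i => v i • Polynomial.leval (a i))) f = word k a v f := by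
  funext j
  induction j using Fin.lastCases <;> simp [LinearMap.pi_apply]

@[simp] lemma word_zero : word k a v (0 : F[X]) = 0 := by
  funext j
  induction j using Fin.lastCases <;> simp

lemma mem_iff {u : Fin (n + 1) → F} :
    u ∈ eGRSCode n k a v ↔ ∃ f : F[X], f.degree < k ∧ word k a v f = u := by
  simp only [eGRSCode, Submodule.mem_map, mem_degreeLT, pi_lastCases_eq_word]

lemma word_mem {f : F[X]} (hf : f.degree < k) : word k a v f ∈ eGRSCode n k a v :=
  mem_iff.2 ⟨f, hf, rfl⟩

lemma hammingNorm_word [DecidableEq F] (hv : ∀ i, v i ≠ 0) (f : F[X]) :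
    hammingNorm (word k a v f) =
      #{i | f.eval (a i) ≠ 0} + if f.coeff (k - 1) = 0 then 0 else 1 := by
  rw [hammingNorm, card_filter, Fin.sum_univ_castSucc, card_filter]
  simp [hv]

lemma add_le_hammingNorm_word [DecidableEq F] (ha : Function.Injective a) (hv : ∀ i, v i ≠ 0)
    {f : F[X]} (hf : f.degree < k) (hf0 : f ≠ 0) :
    n + 2 - k ≤ hammingNorm (word k a v f) := by
  have hdeg := (natDegree_lt_iff_degree_lt hf0).2 hf
  have hzeros := card_filter_eval_eq_zero_le ha hf0
  have hsplit : #{i | f.eval (a i) = 0} + #{i | f.eval (a i) ≠ 0} = n :=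
    (card_filter_add_card_filter_not _).trans (by simp)
  rw [hammingNorm_word hv]
  split_ifs with hlead
  · have : f.natDegree ≠ k - 1 := fun h => hf0 <| leadingCoeff_eq_zero.1 <| by
      rw [leadingCoeff, h, hlead]
    omega
  · omega

theorem finrank_eq (ha : Function.Injective a) (hv : ∀ i, v i ≠ 0) (hkn : k ≤ n) :
    Module.finrank F (eGRSCode n k a v) = k := by
  classical
  let φ : degreeLT F k →ₗ[F] Fin (n + 1) → F :=
    LinearMap.pi (Fin.lastCases (Polynomial.lcoeff F (k - 1))
      (fun i => v i • Polynomial.leval (a i))) ∘ₗ (degreeLT F k).subtype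
  have hφ : φ.range = eGRSCode n k a v := by
    rw [LinearMap.range_comp, Submodule.range_subtype]
    rfl
  have hinj : Function.Injective φ := by
    rw [← LinearMap.ker_eq_bot, LinearMap.ker_eq_bot']
    rintro ⟨f, hf⟩ hφf
    rw [mem_degreeLT] at hf
    by_contra hf0
    have hf0 : f ≠ 0 := fun h => hf0 (Subtype.ext h)
    have := add_le_hammingNorm_word (v := v) ha hv hf hf0
    simp only [φ, LinearMap.comp_apply, Submodule.subtype_apply, pi_lastCases_eq_word] at hφf
    rw [hφf, hammingNorm_zero] at this
    omega
  rw [← hφ, LinearMap.finrank_range_of_inj hinj, (degreeLTEquiv F k).finrank_eq,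
    Module.finrank_fin_fun]

theorem isMinDist [DecidableEq F] (ha : Function.Injective a) (hv : ∀ i, v i ≠ 0)
    (hk : 1 ≤ k) (hkn : k ≤ n) : IsMinDist (eGRSCode n k a v) (n + 2 - k) := by
  refine ⟨fun c hc hc0 => ?_, ?_⟩
  · obtain ⟨f, hf, rfl⟩ := mem_iff.1 hc
    exact add_le_hammingNorm_word ha hv hf (by rintro rfl; exact hc0 word_zero)
  · obtain ⟨s, -, hs⟩ := exists_subset_card_eq (s := (univ : Finset (Fin n))) (n := k - 1)
      (by simp; omega)
    have hlead : (Lagrange.nodal s a).coeff (k - 1) = 1 := by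
      rw [← hs, ← Lagrange.natDegree_nodal (v := a)]
      exact Lagrange.nodal_monic.coeff_natDegree
    have hdeg : (Lagrange.nodal s a).degree < k := by
      rw [Lagrange.degree_nodal, hs]
      exact_mod_cast (by omega : k - 1 < k)
    have hnonzeros : ({i | (Lagrange.nodal s a).eval (a i) ≠ 0} : Finset (Fin n)) = sᶜ := by
      ext i
      simp only [mem_filter, mem_univ, true_and, mem_compl]
      refine ⟨mt Lagrange.eval_nodal_at_node, fun hi => Lagrange.eval_nodal_not_at_node ?_⟩
      exact fun j hj => ha.ne (ne_of_mem_of_not_mem hj hi).symm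
    have hweight : hammingNorm (word k a v (Lagrange.nodal s a)) = n + 2 - k := by
      rw [hammingNorm_word hv, hnonzeros, card_compl, hs, hlead, Fintype.card_fin]
      simp only [one_ne_zero, if_false]
      omega
    exact ⟨_, word_mem hdeg, hammingNorm_pos_iff.1 (by omega), hweight⟩

theorem le_dualCode (ha : Function.Injective a) (hn : n + 1 = 2 * k)
    (hv : ∀ i, v i ^ 2 = -(∏ j ∈ univ.erase i, (a i - a j))⁻¹) :
    eGRSCode n k a v ≤ dualCode (eGRSCode n k a v) := by
  intro u hu c hc
  obtain ⟨f, hf, rfl⟩ := mem_iff.1 hu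
  obtain ⟨g, hg, rfl⟩ := mem_iff.1 hc
  have hdf := natDegree_le_pred_of_degree_lt hf
  have hdg := natDegree_le_pred_of_degree_lt hg
  have hfg : (f * g).degree < #(univ : Finset (Fin n)) := by
    rw [card_univ, Fintype.card_fin]
    exact degree_le_natDegree.trans_lt (by exact_mod_cast natDegree_mul_le.trans_lt (by omega))
  have hlagrange := Lagrange.coeff_eq_sum ha.injOn hfg
  rw [card_univ, Fintype.card_fin, show n - 1 = (k - 1) + (k - 1) by omega,
    coeff_mul_add_eq_of_natDegree_le hdf hdg] at hlagrange
  rw [Fin.sum_univ_castSucc]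
  simp only [word_castSucc, word_last]
  rw [hlagrange, ← sum_add_distrib]
  refine sum_eq_zero fun i _ => ?_
  rw [eval_mul]
  linear_combination (f.eval (a i) * g.eval (a i)) * hv i

end eGRSCode

theorem eGRSCode_MDS_selfDual_general (F : Type*) [Field F] [DecidableEq F]
    {n : ℕ} (hn : Odd n)
    (a : Fin n → F) (ha : Function.Injective a)
    (hsq : ∀ i, ∃ b : F, b ≠ 0 ∧
      -(∏ j ∈ Finset.univ.erase i, (a i - a j))⁻¹ = b ^ 2) :
    ∃ v : Fin n → F, (∀ i, v i ≠ 0) ∧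
      (∀ i, v i ^ 2 = -(∏ j ∈ Finset.univ.erase i, (a i - a j))⁻¹) ∧
      Module.finrank F (eGRSCode n ((n + 1) / 2) a v) = (n + 1) / 2 ∧
      IsMinDist (eGRSCode n ((n + 1) / 2) a v) ((n + 1) / 2 + 1) ∧
      eGRSCode n ((n + 1) / 2) a v = dualCode (eGRSCode n ((n + 1) / 2) a v) := by
  obtain ⟨m, rfl⟩ := hn
  rw [show (2 * m + 1 + 1) / 2 = m + 1 by omega]
  choose v hv0 hvsq using hsq
  have hv : ∀ i, v i ^ 2 = -(∏ j ∈ univ.erase i, (a i - a j))⁻¹ := fun i => (hvsq i).symm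
  have hdim := eGRSCode.finrank_eq ha hv0 (k := m + 1) (by omega)
  refine ⟨v, hv0, hv, hdim, ?_, ?_⟩
  · simpa [show 2 * m + 1 + 2 - (m + 1) = m + 1 + 1 by omega] using
      eGRSCode.isMinDist ha hv0 (k := m + 1) (by omega) (by omega)
  · exact eq_dualCode_of_le (eGRSCode.le_dualCode ha (by omega) hv) (by omega)

/-- [Yan, Lemma 2].  Let `F` be a finite field of odd cardinality `q`,
`n` an odd integer with `n ≤ q`, `k = (n+1)/2`, and `a 0, …, a (n-1)` distinct elements of
`F`.  If `-L_a(a i)⁻¹` is a nonzero square for all `i`, then there are nonzero `v i` with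
`v i ^ 2 = -L_a(a i)⁻¹` such that the extended code `GRS_k(a, v, ∞)` is an MDS Euclidean
self-dual code of length `n + 1`: it has dimension `(n+1)/2`, minimum distance
`(n+1)/2 + 1`, and equals its Euclidean dual in `F^{n+1}`. -/
theorem eGRSCode_MDS_selfDual (F : Type*) [Field F] [Fintype F] [DecidableEq F]
    (hq : Odd (Fintype.card F))
    {n : ℕ} (hn : Odd n) (hnq : n ≤ Fintype.card F)
    (a : Fin n → F) (ha : Function.Injective a)
    (hsq : ∀ i, ∃ b : F, b ≠ 0 ∧
      -(∏ j ∈ Finset.univ.erase i, (a i - a j))⁻¹ = b ^ 2) :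
    ∃ v : Fin n → F, (∀ i, v i ≠ 0) ∧
      (∀ i, v i ^ 2 = -(∏ j ∈ Finset.univ.erase i, (a i - a j))⁻¹) ∧
      Module.finrank F (eGRSCode n ((n + 1) / 2) a v) = (n + 1) / 2 ∧
      IsMinDist (eGRSCode n ((n + 1) / 2) a v) ((n + 1) / 2 + 1) ∧
      eGRSCode n ((n + 1) / 2) a v = dualCode (eGRSCode n ((n + 1) / 2) a v) :=
  eGRSCode_MDS_selfDual_general F hn a ha hsq
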